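/- arXiv:2101.06080 — 2 statements merged into one kernel-verified Lean document; each statement's English description precedes it below -/
import Mathlib

section
/- For a word w over {1,2}, the semistandard insertion tableau P(w) of the RSK correspondence is determined by (and determines) the pair consisting of the rank r(w) (number of paired 21-factors) together with the multiplicities of 1's and 2's in w. That is, two words u, v over {1,2} of the same length satisfy P(u) = P(v) if and only if r(u) = r(v) and u, v contain the same number of 1's (equivalently, the same number of 2's). -/
open MeasureTheory ProbabilityTheory

namespace RSKpaper

/-- Insert a letter into a row (Schensted row insertion); returns the new row
and the bumped letter, if any. -/
def rowInsert (r : List ℕ) (a : ℕ) : List ℕ × Option ℕ :=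
  match r.findIdx? (fun b => decide (a < b)) with
  | none => (r ++ [a], none)
  | some i => (r.set i a, r[i]?)

/-- Insert a letter into a tableau (list of rows). -/
def tabInsert : List (List ℕ) → ℕ → List (List ℕ)
  | [], a => [[a]]
  | r :: rs, a =>
    match rowInsert r a with
    | (r', none) => r' :: rs
    | (r', some b) => r' :: tabInsert rs b

/-- The RSK insertion tableau `P(w)` of a word. -/
def Ptab (w : List ℕ) : List (List ℕ) := w.foldl tabInsert ([] : List (List ℕ))

/-- The shape of the RSK tableaux of a word, as the list of row lengths. -/
def shape (w : List ℕ) : List ℕ := (Ptab w).map List.length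

/-- The RSK recording tableau `Q(w)`: the entry `i+1` is placed in the row in
which the shape grows when the `(i+1)`-st letter is inserted. -/
def Qtab (w : List ℕ) : List (List ℕ) :=
  (List.range w.length).foldl (fun q i =>
    let s1 := shape (w.take i)
    let s2 := shape (w.take (i + 1))
    let j := (List.range s2.length).findIdx
      (fun r => decide (s2.getD r 0 ≠ s1.getD r 0))
    if j < q.length then q.set j (q.getD j ([] : List ℕ) ++ [i + 1]) else q ++ [[i + 1]]) ([] : List (List ℕ))

/-- Iterated bracketing of factors `21` in a two–letter word, 1-based positions:
returns the stack of positions of currently unmatched `2`'s together with the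
list of bracketed pairs `(position of 2, position of 1)`. -/
def bracketFold (w : List ℕ) : List ℕ × List (ℕ × ℕ) :=
  (w.zipIdx.map Prod.swap).foldl (fun st p =>
    if p.2 = 2 then ((p.1 + 1) :: st.1, st.2)
    else
      match st.1 with
      | [] => st
      | j :: rest => (rest, (j, p.1 + 1) :: st.2)) ([], [])

/-- The rank `r(w)`: the number of bracketed `21`-pairs. -/
def rank (w : List ℕ) : ℕ := (bracketFold w).2.length

/-- The set of paired (bracketed) 1-based positions of a two-letter word. -/
def pairedPositions (w : List ℕ) : Finset ℕ :=
  ((bracketFold w).2.map (fun p => p.1)).toFinset ∪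
    ((bracketFold w).2.map (fun p => p.2)).toFinset

/-- The set of free (unbracketed) 1-based positions of a two-letter word. -/
def freePositions (w : List ℕ) : Finset ℕ :=
  (Finset.Icc 1 w.length) \ pairedPositions w

/-- The 1-based positions of the free `1`'s of a two-letter word. -/
def freeOnePositions (w : List ℕ) : Finset ℕ :=
  (freePositions w).filter (fun i => w.getD (i - 1) 0 = 1)

/-- The initial segment `[x]_n` of an infinite sequence, as a word. -/
def pre (n : ℕ) (x : ℕ → ℕ) : List ℕ := (List.range n).map x

/-- A two–letter Bernoulli ensemble: coordinates are i.i.d. with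
`P(1) = p₁`, `P(2) = p₂`. -/
def IsBernoulli2 (μ : Measure (ℕ → ℕ)) (p₁ p₂ : ℝ) : Prop :=
  IsProbabilityMeasure μ ∧
    iIndepFun (fun n (x : ℕ → ℕ) => x n) μ ∧
    (∀ n : ℕ, μ {x | x n = 1} = ENNReal.ofReal p₁) ∧
    (∀ n : ℕ, μ {x | x n = 2} = ENNReal.ofReal p₂) ∧
    p₁ + p₂ = 1

/-- A `k`-letter Bernoulli ensemble with letter probabilities `p 1 ≥ … ≥ p k`. -/
def IsBernoulliK (μ : Measure (ℕ → ℕ)) (k : ℕ) (p : ℕ → ℝ) : Prop :=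
  IsProbabilityMeasure μ ∧
    iIndepFun (fun n (x : ℕ → ℕ) => x n) μ ∧
    (∀ n i : ℕ, μ {x | x n = i} = ENNReal.ofReal (p i)) ∧
    (∀ i : ℕ, i < 1 ∨ k < i → p i = 0) ∧
    (∀ i : ℕ, 1 ≤ i → i < k → p (i + 1) ≤ p i) ∧
    0 < p k ∧ (∑ i ∈ Finset.Icc 1 k, p i) = 1

/-!
For a word `w` over `{1, 2}` the insertion tableau stays of the form `[1^a 2^c, 2^r]` with
`a = #1(w)`, `c` the number of unmatched `2`'s and `r = rank w`: inserting a `2` appends it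
to the first row and opens a bracket, while inserting a `1` bumps a `2` into the second row
exactly when there is an open bracket for it to close. Since `c + r = #2(w)`, for words of a
fixed length the tableau and the pair `(rank w, #1(w))` determine each other.
-/

theorem _root_.List.count_add_count_of_forall_mem {α : Type*} [DecidableEq α] {a b : α} {l : List α}
    (hab : a ≠ b) (hl : ∀ x ∈ l, x = a ∨ x = b) : l.count a + l.count b = l.length := by
  induction l with
  | nil => rfl
  | cons x l ih =>
    have := ih fun y hy => hl y (List.mem_cons_of_mem x hy)
    rcases hl x List.mem_cons_self with rfl | rfl <;>
      simp only [List.count_cons_self, List.count_cons_of_ne hab, List.count_cons_of_ne hab.symm,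
        List.length_cons] <;> omega

/-- Empty rows are omitted, so this is a tableau, injective in `(a, c, r)`, only when `r ≤ a`. -/
def twoLetterTableau (a c r : ℕ) : List (List ℕ) :=
  (if a + c = 0 then [] else [List.replicate a 1 ++ List.replicate c 2]) ++
  (if r = 0 then [] else [List.replicate r 2])

theorem rowInsert_two (a c : ℕ) :
    rowInsert (List.replicate a 1 ++ List.replicate c 2) 2
      = (List.replicate a 1 ++ List.replicate (c + 1) 2, none) := by
  simp [rowInsert, List.replicate_succ']

theorem rowInsert_one_of_no_twos (a : ℕ) :
    rowInsert (List.replicate a 1) 1 = (List.replicate (a + 1) 1, none) := by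
  simp [rowInsert, List.replicate_succ']

theorem rowInsert_one_bumps_two (a c : ℕ) :
    rowInsert (List.replicate a 1 ++ List.replicate (c + 1) 2) 1
      = (List.replicate (a + 1) 1 ++ List.replicate c 2, some 2) := by
  rw [List.replicate_succ' (n := a), List.append_assoc]
  simp [rowInsert, List.replicate_succ, List.findIdx?_cons]

theorem tabInsert_twoLetterTableau_two {a c r : ℕ} (h : r ≤ a) :
    tabInsert (twoLetterTableau a c r) 2 = twoLetterTableau a (c + 1) r := by
  rcases Nat.eq_zero_or_pos (a + c) with h0 | h0
  · obtain ⟨rfl, rfl, rfl⟩ : a = 0 ∧ c = 0 ∧ r = 0 := by omega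
    rfl
  · simp only [twoLetterTableau, if_neg h0.ne', if_neg (by omega : a + (c + 1) ≠ 0),
      List.singleton_append, tabInsert, rowInsert_two]

theorem tabInsert_twoLetterTableau_one_of_no_twos {a r : ℕ} (h : r ≤ a) :
    tabInsert (twoLetterTableau a 0 r) 1 = twoLetterTableau (a + 1) 0 r := by
  rcases Nat.eq_zero_or_pos a with rfl | ha
  · obtain rfl : r = 0 := by omega
    rfl
  · simp [twoLetterTableau, tabInsert, rowInsert_one_of_no_twos, ha.ne']

theorem tabInsert_twoLetterTableau_one (a c r : ℕ) :
    tabInsert (twoLetterTableau a (c + 1) r) 1 = twoLetterTableau (a + 1) c (r + 1) := by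
  rcases Nat.eq_zero_or_pos r with rfl | hr
  · simp [twoLetterTableau, tabInsert, rowInsert_one_bumps_two]
  · have hrow : rowInsert (List.replicate r 2) 2 = (List.replicate (r + 1) 2, none) := by
      simpa using rowInsert_two 0 r
    simp [twoLetterTableau, tabInsert, rowInsert_one_bumps_two, hrow, hr.ne']

theorem twoLetterTableau_inj {a c r a' c' r' : ℕ} (h : r ≤ a) (h' : r' ≤ a') :
    twoLetterTableau a c r = twoLetterTableau a' c' r' ↔ a = a' ∧ c = c' ∧ r = r' := by
  refine ⟨fun he => ?_, by rintro ⟨rfl, rfl, rfl⟩; rfl⟩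
  let params (t : List (List ℕ)) : ℕ × ℕ × ℕ :=
    ((t.getD 0 []).count 1, (t.getD 0 []).count 2, (t.getD 1 []).length)
  have params_eq {a c r : ℕ} (h : r ≤ a) : params (twoLetterTableau a c r) = (a, c, r) := by
    rcases Nat.eq_zero_or_pos (a + c) with h0 | h0
    · obtain ⟨rfl, rfl, rfl⟩ : a = 0 ∧ c = 0 ∧ r = 0 := by omega
      rfl
    · rw [twoLetterTableau, if_neg h0.ne']
      rcases Nat.eq_zero_or_pos r with rfl | hr
      · simp [params, List.count_replicate]
      · simp [params, hr.ne', List.count_replicate]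
  simpa [params_eq h, params_eq h'] using congrArg params he

def unmatchedTwos (w : List ℕ) : ℕ := (bracketFold w).1.length

theorem bracketFold_append_singleton (w : List ℕ) (x : ℕ) :
    bracketFold (w ++ [x]) =
      if x = 2 then ((w.length + 1) :: (bracketFold w).1, (bracketFold w).2)
      else
        match (bracketFold w).1 with
        | [] => bracketFold w
        | j :: rest => (rest, (j, w.length + 1) :: (bracketFold w).2) := by
  simp [bracketFold, List.zipIdx_append]

theorem rank_append_two (w : List ℕ) : rank (w ++ [2]) = rank w := by
  simp [rank, bracketFold_append_singleton]

theorem unmatchedTwos_append_two (w : List ℕ) :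
    unmatchedTwos (w ++ [2]) = unmatchedTwos w + 1 := by
  simp [unmatchedTwos, bracketFold_append_singleton]

theorem rank_append_of_ne_two {w : List ℕ} {x : ℕ} (hx : x ≠ 2) :
    rank (w ++ [x]) = if unmatchedTwos w = 0 then rank w else rank w + 1 := by
  simp only [rank, unmatchedTwos, bracketFold_append_singleton, if_neg hx]
  split <;> simp_all

theorem unmatchedTwos_append_of_ne_two {w : List ℕ} {x : ℕ} (hx : x ≠ 2) :
    unmatchedTwos (w ++ [x]) = unmatchedTwos w - 1 := by
  simp only [unmatchedTwos, bracketFold_append_singleton, if_neg hx]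
  split <;> simp_all

theorem unmatchedTwos_add_rank (w : List ℕ) : unmatchedTwos w + rank w = w.count 2 := by
  induction w using List.reverseRecOn with
  | nil => rfl
  | append_singleton w x ih =>
    by_cases hx : x = 2
    · subst hx
      rw [unmatchedTwos_append_two, rank_append_two, List.count_append, List.count_singleton_self]
      omega
    · rw [unmatchedTwos_append_of_ne_two hx, rank_append_of_ne_two hx, List.count_append,
        List.count_cons_of_ne hx, List.count_nil]
      split <;> omega

theorem rank_le_count_one {w : List ℕ} (hw : ∀ x ∈ w, x = 1 ∨ x = 2) : rank w ≤ w.count 1 := by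
  induction w using List.reverseRecOn with
  | nil => exact le_rfl
  | append_singleton w x ih =>
    have := ih fun y hy => hw y (List.mem_append_left _ hy)
    rcases hw x (by simp) with rfl | rfl
    · rw [rank_append_of_ne_two (by decide), List.count_append, List.count_singleton_self]
      split <;> omega
    · simp [rank_append_two, this]

theorem Ptab_append_singleton (w : List ℕ) (x : ℕ) : Ptab (w ++ [x]) = tabInsert (Ptab w) x :=
  List.foldl_append ..

theorem Ptab_eq_twoLetterTableau {w : List ℕ} (hw : ∀ x ∈ w, x = 1 ∨ x = 2) :
    Ptab w = twoLetterTableau (w.count 1) (unmatchedTwos w) (rank w) := by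
  induction w using List.reverseRecOn with
  | nil => rfl
  | append_singleton w x ih =>
    have hw' : ∀ y ∈ w, y = 1 ∨ y = 2 := fun y hy => hw y (List.mem_append_left _ hy)
    have hr := rank_le_count_one hw'
    rw [Ptab_append_singleton, ih hw']
    rcases hw x (by simp) with rfl | rfl
    · rw [rank_append_of_ne_two (by decide), unmatchedTwos_append_of_ne_two (by decide)]
      rcases unmatchedTwos w with _ | k
      · simpa using tabInsert_twoLetterTableau_one_of_no_twos hr
      · simpa using tabInsert_twoLetterTableau_one (w.count 1) k (rank w)
    · simpa [rank_append_two, unmatchedTwos_append_two] using tabInsert_twoLetterTableau_two hr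

/-- for two-letter words of the same length, the insertion tableaux
coincide iff the ranks and the multiplicities of the letter `1` coincide. -/
theorem Ptab_eq_iff_rank_and_count (u v : List ℕ)
    (hu : ∀ a ∈ u, a = 1 ∨ a = 2) (hv : ∀ a ∈ v, a = 1 ∨ a = 2)
    (hlen : u.length = v.length) :
    Ptab u = Ptab v ↔ rank u = rank v ∧ u.count 1 = v.count 1 := by
  rw [Ptab_eq_twoLetterTableau hu, Ptab_eq_twoLetterTableau hv,
    twoLetterTableau_inj (rank_le_count_one hu) (rank_le_count_one hv)]
  have hu₂ := unmatchedTwos_add_rank u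
  have hv₂ := unmatchedTwos_add_rank v
  have hu₁ := List.count_add_count_of_forall_mem (by decide) hu
  have hv₁ := List.count_add_count_of_forall_mem (by decide) hv
  constructor <;> intro h <;> omega

end RSKpaper
end

section
/- Let x be a random infinite sequence of independent letters from {1,2} with P(1) = p_1 ≥ p_2 = P(2) > 0, p_1 + p_2 = 1. Then almost surely x has an initial segment containing strictly more 1's than 2's; consequently, almost surely x contains infinitely many free 1's and every 2 in x becomes paired in some sufficiently long initial segment (under the iterated bracketing of factors 21). -/
/-!
Let `S n = #1 - #2` in `[x]_n`. Under the Bernoulli measure `S` is a submartingale (drift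
`p₁ - p₂ ≥ 0`) whose steps are `±1` almost surely. By the one-sided martingale bound it is
almost surely either convergent or unbounded above, and steps of size one rule out convergence,
so `S` exceeds every level.

The rest is deterministic. Each bracketed pair uses up one `2`, so a word in which the `1`'s
outnumber the `2`'s by `k` has at least `k` free `1`'s, and a free `1` stays free in every longer
word. The `2`'s still waiting for a partner form a stack, and the suffix after such a `2` never
contains more `1`'s than `2`'s; once `S n ≥ j + 1`, the suffix after position `j` does, so a
`2` at position `j` has been paired.
-/

open MeasureTheory ProbabilityTheory Filter Topology

section RandomWalk

variable {Ω : Type*} {m : MeasurableSpace Ω} {μ : Measure Ω}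

theorem ProbabilityTheory.iIndepFun.indep_comap_natural {X : ℕ → Ω → ℝ}
    (hmeas : ∀ i, StronglyMeasurable (X i)) (hind : iIndepFun X μ) (n : ℕ) :
    Indep (MeasurableSpace.comap (X (n + 1)) inferInstance) (Filtration.natural X hmeas n) μ := by
  have h := indep_iSup_of_disjoint (fun i => (hmeas i).measurable.comap_le) hind.iIndep
    (S := {n + 1}) (T := Set.Iic n) (by simp)
  refine indep_of_indep_of_le_left h ?_
  exact le_iSup₂ (f := fun i (_ : i ∈ ({n + 1} : Set ℕ)) => MeasurableSpace.comap (X i) _)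
    (n + 1) rfl

theorem ProbabilityTheory.iIndepFun.submartingale_partialSum [IsFiniteMeasure μ]
    {X : ℕ → Ω → ℝ} (hmeas : ∀ i, StronglyMeasurable (X i)) (hind : iIndepFun X μ)
    (hint : ∀ i, Integrable (X i) μ) (hmean : ∀ i, 0 ≤ μ[X i]) :
    Submartingale (fun n ω => ∑ i ∈ Finset.range (n + 1), X i ω)
      (Filtration.natural X hmeas) μ := by
  refine submartingale_of_condExp_sub_nonneg_nat (fun n => ?_)
    (fun n => integrable_finsetSum _ fun i _ => hint i) (fun n => ?_)
  · refine Finset.stronglyMeasurable_fun_sum _ fun i hi => ?_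
    exact (Filtration.stronglyAdapted_natural hmeas i).mono
      ((Filtration.natural X hmeas).mono (Nat.lt_succ_iff.1 (Finset.mem_range.1 hi)))
  · have hinc : (fun ω => ∑ i ∈ Finset.range (n + 1 + 1), X i ω) -
        (fun ω => ∑ i ∈ Finset.range (n + 1), X i ω) = X (n + 1) := by
      funext ω
      simp [Finset.sum_range_succ _ (n + 1)]
    rw [hinc]
    filter_upwards [condExp_indep_eq (hmeas (n + 1)).measurable.comap_le
      ((Filtration.natural X hmeas).le n)
      (Measurable.of_comap_le le_rfl).stronglyMeasurable
      (hind.indep_comap_natural hmeas n)] with ω hω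
    rw [hω]
    exact hmean (n + 1)

theorem MeasureTheory.Submartingale.ae_not_bddAbove_of_le_abs_sub [IsFiniteMeasure μ]
    {ℱ : Filtration ℕ m} {f : ℕ → Ω → ℝ} (hf : Submartingale f ℱ μ) {ε : ℝ} (hε : 0 < ε)
    {R : NNReal}
    (hinc : ∀ᵐ ω ∂μ, ∀ n, ε ≤ |f (n + 1) ω - f n ω| ∧ |f (n + 1) ω - f n ω| ≤ R) :
    ∀ᵐ ω ∂μ, ¬ BddAbove (Set.range fun n => f n ω) := by
  filter_upwards [hf.bddAbove_iff_exists_tendsto (hinc.mono fun _ h n => (h n).2), hinc]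
    with ω hiff hω hbdd
  obtain ⟨c, hc⟩ := hiff.1 hbdd
  have hzero : Tendsto (fun n => f (n + 1) ω - f n ω) atTop (𝓝 0) := by
    simpa using (hc.comp (tendsto_add_atTop_nat 1)).sub hc
  obtain ⟨n, hn⟩ := (Metric.tendsto_nhds.1 hzero ε hε).exists
  rw [Real.dist_0_eq_abs] at hn
  linarith [(hω n).1]

end RandomWalk

namespace RSKpaper

section Bracketing

lemma bracketFold_concat_cases (w : List ℕ) (a : ℕ) :
    (a = 2 ∧ bracketFold (w ++ [a]) =
        ((w.length + 1) :: (bracketFold w).1, (bracketFold w).2)) ∨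
    (a ≠ 2 ∧ (bracketFold w).1 = [] ∧ bracketFold (w ++ [a]) = bracketFold w) ∨
    (∃ j rest, a ≠ 2 ∧ (bracketFold w).1 = j :: rest ∧
      bracketFold (w ++ [a]) = (rest, (j, w.length + 1) :: (bracketFold w).2)) := by
  have hstep : bracketFold (w ++ [a]) =
      if a = 2 then ((w.length + 1) :: (bracketFold w).1, (bracketFold w).2)
      else match (bracketFold w).1 with
        | [] => bracketFold w
        | j :: rest => (rest, (j, w.length + 1) :: (bracketFold w).2) := by
    unfold bracketFold
    rw [List.zipIdx_append, List.map_append, List.foldl_append, Nat.zero_add]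
    rfl
  by_cases ha : a = 2
  · exact Or.inl ⟨ha, by rw [hstep, if_pos ha]⟩
  · rw [hstep, if_neg ha]
    rcases hS : (bracketFold w).1 with _ | ⟨j, rest⟩
    · exact Or.inr (Or.inl ⟨ha, rfl, rfl⟩)
    · exact Or.inr (Or.inr ⟨j, rest, ha, rfl, rfl⟩)

lemma mem_pairedPositions {w : List ℕ} {q : ℕ} :
    q ∈ pairedPositions w ↔ ∃ p ∈ (bracketFold w).2, p.1 = q ∨ p.2 = q := by
  simp only [pairedPositions, Finset.mem_union, List.mem_toFinset, List.mem_map]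
  grind

lemma exists_pairs_append_eq (w v : List ℕ) :
    ∃ new, (bracketFold (w ++ v)).2 = new ++ (bracketFold w).2 ∧
      ∀ p ∈ new, w.length < p.2 := by
  induction v using List.reverseRecOn with
  | nil => exact ⟨[], by simp⟩
  | append_singleton v a ih =>
    obtain ⟨new, hnew, hlt⟩ := ih
    rw [← List.append_assoc]
    rcases bracketFold_concat_cases (w ++ v) a with ⟨-, h⟩ | ⟨-, -, h⟩ | ⟨j, _, _, _, h⟩
    · exact ⟨new, by rw [h, hnew], hlt⟩
    · exact ⟨new, by rw [h, hnew], hlt⟩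
    · refine ⟨(j, (w ++ v).length + 1) :: new, by rw [h, hnew, List.cons_append], ?_⟩
      simp only [List.mem_cons, forall_eq_or_imp, List.length_append]
      exact ⟨by omega, hlt⟩

lemma pairedPositions_subset_append (w v : List ℕ) :
    pairedPositions w ⊆ pairedPositions (w ++ v) := by
  intro q hq
  obtain ⟨new, hnew, -⟩ := exists_pairs_append_eq w v
  obtain ⟨p, hp, hpq⟩ := mem_pairedPositions.1 hq
  exact mem_pairedPositions.2 ⟨p, by simp [hnew, hp], hpq⟩

lemma getElem?_append_of_getElem? {α : Type*} {l₁ : List α} {i : ℕ} {b : α} (l₂ : List α)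
    (h : l₁[i]? = some b) : (l₁ ++ l₂)[i]? = some b := by
  obtain ⟨hi, -⟩ := List.getElem?_eq_some_iff.1 h
  rw [List.getElem?_append_left hi, h]

lemma bracketFold_letter_two (w : List ℕ) :
    (∀ q ∈ (bracketFold w).1, w[q - 1]? = some 2) ∧
      ∀ p ∈ (bracketFold w).2, w[p.1 - 1]? = some 2 := by
  induction w using List.reverseRecOn with
  | nil => simp [bracketFold]
  | append_singleton w a ih =>
    obtain ⟨hstack, hpairs⟩ := ih
    rcases bracketFold_concat_cases w a with ⟨rfl, h⟩ | ⟨-, -, h⟩ | ⟨j, rest, -, hS, h⟩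
    · rw [h]
      refine ⟨?_, fun p hp => getElem?_append_of_getElem? _ (hpairs p hp)⟩
      simp only [List.mem_cons, forall_eq_or_imp]
      exact ⟨by simp, fun q hq => getElem?_append_of_getElem? _ (hstack q hq)⟩
    · rw [h]
      exact ⟨fun q hq => getElem?_append_of_getElem? _ (hstack q hq),
        fun p hp => getElem?_append_of_getElem? _ (hpairs p hp)⟩
    · rw [hS] at hstack
      rw [h]
      simp only [List.mem_cons, forall_eq_or_imp] at hstack ⊢
      exact ⟨fun q hq => getElem?_append_of_getElem? _ (hstack.2 q hq),
        getElem?_append_of_getElem? _ hstack.1,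
        fun p hp => getElem?_append_of_getElem? _ (hpairs p hp)⟩

lemma notMem_pairedPositions_append {w : List ℕ} {q a : ℕ} (v : List ℕ)
    (hq : w[q - 1]? = some a) (ha : a ≠ 2) (hfree : q ∉ pairedPositions w) :
    q ∉ pairedPositions (w ++ v) := by
  intro hpaired
  obtain ⟨p, hp, hpq⟩ := mem_pairedPositions.1 hpaired
  obtain ⟨new, hnew, hlt⟩ := exists_pairs_append_eq w v
  rw [hnew, List.mem_append] at hp
  rcases hp with hp | hp
  · rcases hpq with rfl | rfl
    · have h2 := (bracketFold_letter_two (w ++ v)).2 p (by simp [hnew, hp])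
      rw [getElem?_append_of_getElem? v hq] at h2
      exact ha (Option.some_injective _ h2)
    · have := (List.getElem?_eq_some_iff.1 hq).1
      have := hlt p hp
      omega
  · exact hfree (mem_pairedPositions.2 ⟨p, hp, hpq⟩)

lemma length_stack_add_length_pairs (w : List ℕ) :
    (bracketFold w).1.length + (bracketFold w).2.length = w.count 2 := by
  induction w using List.reverseRecOn with
  | nil => rfl
  | append_singleton w a ih =>
    rcases bracketFold_concat_cases w a with
      ⟨rfl, h⟩ | ⟨ha, -, h⟩ | ⟨j, rest, ha, hS, h⟩
    · simp only [h, List.length_cons, List.count_append, List.count_singleton_self]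
      omega
    · simp [h, List.count_append, ha, ih]
    · have h0 : [a].count 2 = 0 := by simp [ha]
      rw [hS] at ih
      simp only [h, List.length_cons, List.count_append, h0] at ih ⊢
      omega

/-- The `i`-th `2` from the top of the stack is followed by `i` more `2`'s than other letters. -/
lemma stack_getElem?_balance (w : List ℕ) {i j : ℕ} (hij : (bracketFold w).1[i]? = some j) :
    i + (w.drop j).length = 2 * (w.drop j).count 2 := by
  induction w using List.reverseRecOn generalizing i with
  | nil => simp [bracketFold] at hij
  | append_singleton w a ih =>
    have hjle : ∀ {k}, (bracketFold w).1[k]? = some j → j ≤ w.length := fun hk => by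
      have := (List.getElem?_eq_some_iff.1
        ((bracketFold_letter_two w).1 j (List.mem_of_getElem? hk))).1
      omega
    have hcount : ∀ {a}, a ≠ 2 → [a].count 2 = 0 := fun ha => by simp [ha]
    rcases bracketFold_concat_cases w a with
      ⟨rfl, h⟩ | ⟨-, hS, h⟩ | ⟨k, rest, ha, hS, h⟩
    · rw [h] at hij
      cases i with
      | zero =>
        obtain rfl : w.length + 1 = j := by simpa using hij
        simp
      | succ i =>
        have hj := hjle hij
        simp only [List.getElem?_cons_succ] at hij
        simp only [List.drop_append_of_le_length hj, List.length_append, List.count_append,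
          List.length_singleton, List.count_singleton_self]
        have := ih hij
        omega
    · simp [h, hS] at hij
    · have hij' : (bracketFold w).1[i + 1]? = some j := by simpa [hS, h] using hij
      have hj := hjle hij'
      have := ih hij'
      simp only [List.drop_append_of_le_length hj, List.length_append, List.count_append,
        List.length_singleton, hcount ha]
      omega

lemma length_drop_le_of_mem_stack {w : List ℕ} {j : ℕ} (hj : j ∈ (bracketFold w).1) :
    (w.drop j).length ≤ 2 * (w.drop j).count 2 := by
  obtain ⟨i, hi⟩ := List.mem_iff_getElem?.1 hj
  have := stack_getElem?_balance w hi
  omega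

lemma mem_stack_or_mem_pairedPositions {w : List ℕ} {q : ℕ} (hq1 : 1 ≤ q)
    (hq : w[q - 1]? = some 2) : q ∈ (bracketFold w).1 ∨ q ∈ pairedPositions w := by
  induction w using List.reverseRecOn with
  | nil => simp at hq
  | append_singleton w a ih =>
    rcases Nat.lt_or_ge (q - 1) w.length with hlt | hge
    · rw [List.getElem?_append_left hlt] at hq
      rcases ih hq with hS | hP
      · rcases bracketFold_concat_cases w a with
          ⟨rfl, h⟩ | ⟨-, hS', -⟩ | ⟨k, rest, -, hS', h⟩
        · simp [h, hS]
        · simp [hS'] at hS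
        · rw [hS', List.mem_cons] at hS
          rcases hS with rfl | hS
          · exact Or.inr
              (mem_pairedPositions.2 ⟨(q, w.length + 1), by simp [h], Or.inl rfl⟩)
          · simp [h, hS]
      · exact Or.inr (pairedPositions_subset_append w [a] hP)
    · have hq' : q = w.length + 1 := by
        have := (List.getElem?_eq_some_iff.1 hq).1
        rw [List.length_append, List.length_singleton] at this
        omega
      subst hq'
      have ha : a = 2 := by simpa using hq
      rcases bracketFold_concat_cases w a with
        ⟨-, h⟩ | ⟨ha', -, -⟩ | ⟨k, rest, ha', -, -⟩
      · simp [h]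
      · exact absurd ha ha'
      · exact absurd ha ha'

lemma count_add_count_le_length {α : Type*} [BEq α] [LawfulBEq α] {l : List α} {a b : α}
    (hab : a ≠ b) :
    l.count a + l.count b ≤ l.length := by
  induction l with
  | nil => simp
  | cons c l ih =>
    simp only [List.count_cons, List.length_cons, beq_iff_eq]
    split_ifs with ha hb
    · exact absurd ((beq_iff_eq.1 ha).symm.trans (beq_iff_eq.1 hb)) hab
    all_goals omega

lemma mem_pairedPositions_of_count_lt {w : List ℕ} {q : ℕ} (hq1 : 1 ≤ q)
    (hq : w[q - 1]? = some 2) (hlt : (w.drop q).count 2 < (w.drop q).count 1) :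
    q ∈ pairedPositions w := by
  refine (mem_stack_or_mem_pairedPositions hq1 hq).resolve_left fun hS => ?_
  have := length_drop_le_of_mem_stack hS
  have := count_add_count_le_length (l := w.drop q) (show 1 ≠ 2 by decide)
  omega

lemma card_filter_getD_eq_count (w : List ℕ) (a : ℕ) :
    ((Finset.Icc 1 w.length).filter (fun q => w.getD (q - 1) 0 = a)).card = w.count a := by
  induction w using List.reverseRecOn with
  | nil => simp
  | append_singleton w b ih =>
    have hprefix : ((Finset.Icc 1 w.length).filter
        (fun q => (w ++ [b]).getD (q - 1) 0 = a)) =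
        (Finset.Icc 1 w.length).filter (fun q => w.getD (q - 1) 0 = a) :=
      Finset.filter_congr fun q hq => by
        rw [List.getD_append _ _ _ _ (by have := Finset.mem_Icc.1 hq; omega)]
    rw [List.length_append, List.length_singleton,
      ← Finset.insert_Icc_right_eq_Icc_add_one (by omega), Finset.filter_insert, hprefix,
      List.count_append, ← ih]
    by_cases hb : b = a
    · rw [if_pos (by simpa using hb), Finset.card_insert_of_notMem (by simp)]
      simp [hb]
    · rw [if_neg (by simpa using hb)]
      simp [hb]

lemma count_one_le_card_freeOnePositions_add (w : List ℕ) :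
    w.count 1 ≤ (freeOnePositions w).card + w.count 2 := by
  set seconds := ((bracketFold w).2.map Prod.snd).toFinset
  have hsub : (Finset.Icc 1 w.length).filter (fun q => w.getD (q - 1) 0 = 1) ⊆
      freeOnePositions w ∪ seconds := by
    intro q hq
    rw [Finset.mem_filter] at hq
    by_cases hpaired : q ∈ pairedPositions w
    · obtain ⟨p, hp, rfl | rfl⟩ := mem_pairedPositions.1 hpaired
      · have h2 := (bracketFold_letter_two w).2 p hp
        rw [List.getD_eq_getElem?_getD, h2] at hq
        simp at hq
      · exact Finset.mem_union_right _ (List.mem_toFinset.2 (List.mem_map_of_mem hp))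
    · exact Finset.mem_union_left _ (Finset.mem_filter.2
        ⟨Finset.mem_sdiff.2 ⟨hq.1, hpaired⟩, hq.2⟩)
  have hseconds : seconds.card ≤ w.count 2 := by
    have := length_stack_add_length_pairs w
    have : seconds.card ≤ (bracketFold w).2.length :=
      (List.toFinset_card_le _).trans_eq (List.length_map _)
    omega
  calc w.count 1
      = ((Finset.Icc 1 w.length).filter (fun q => w.getD (q - 1) 0 = 1)).card :=
        (card_filter_getD_eq_count w 1).symm
    _ ≤ (freeOnePositions w ∪ seconds).card := Finset.card_le_card hsub
    _ ≤ (freeOnePositions w).card + seconds.card := Finset.card_union_le _ _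
    _ ≤ (freeOnePositions w).card + w.count 2 := by omega

end Bracketing

section Prefixes

variable (x : ℕ → ℕ)

lemma length_pre (n : ℕ) : (pre n x).length = n := by simp [pre]

lemma pre_succ (n : ℕ) : pre (n + 1) x = pre n x ++ [x n] := by
  simp [pre, List.range_succ]

lemma getElem?_pre {i n : ℕ} (h : i < n) : (pre n x)[i]? = some (x i) := by
  simp [pre, h]

lemma pre_eq_pre_append_drop {m n : ℕ} (h : m ≤ n) :
    pre n x = pre m x ++ (pre n x).drop m := by
  conv_lhs => rw [← List.take_append_drop m (pre n x)]
  simp [pre, ← List.map_take, List.take_range, Nat.min_eq_left h]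

lemma pairedPositions_pre_mono {m n : ℕ} (h : m ≤ n) :
    pairedPositions (pre m x) ⊆ pairedPositions (pre n x) := by
  rw [pre_eq_pre_append_drop x h]
  exact pairedPositions_subset_append _ _

variable {x}

lemma notMem_pairedPositions_pre_of_mem_freeOnePositions {n q : ℕ}
    (hq : q ∈ freeOnePositions (pre n x)) (N : ℕ) : q ∉ pairedPositions (pre N x) := by
  simp only [freeOnePositions, freePositions, Finset.mem_filter, Finset.mem_sdiff,
    Finset.mem_Icc, length_pre] at hq
  obtain ⟨⟨⟨hq1, hqn⟩, hfree⟩, hone⟩ := hq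
  rcases le_total N n with hN | hN
  · exact fun h => hfree (pairedPositions_pre_mono x hN h)
  · rw [pre_eq_pre_append_drop x hN]
    refine notMem_pairedPositions_append _ (a := 1) ?_ (by decide) hfree
    rw [getElem?_pre x (by omega)]
    rw [List.getD_eq_getElem?_getD, getElem?_pre x (by omega)] at hone
    simpa using hone

lemma exists_lt_mem_freeOnePositions {n t : ℕ}
    (hn : (pre n x).count 2 + (t + 1) ≤ (pre n x).count 1) :
    ∃ q ∈ freeOnePositions (pre n x), t < q := by
  by_contra! hle
  have hsub : freeOnePositions (pre n x) ⊆ Finset.Icc 1 t := fun q hq =>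
    Finset.mem_Icc.2 ⟨(Finset.mem_Icc.1 (Finset.mem_sdiff.1 (Finset.mem_filter.1 hq).1).1).1,
      hle q hq⟩
  have := (Finset.card_le_card hsub).trans_eq (Nat.card_Icc 1 t)
  have := count_one_le_card_freeOnePositions_add (pre n x)
  omega

lemma infinite_setOf_free_one
    (hx : ∀ L : ℕ, ∃ n, (pre n x).count 2 + L ≤ (pre n x).count 1) :
    {j : ℕ | 1 ≤ j ∧ x (j - 1) = 1 ∧
      ∃ M, ∀ N, M ≤ N → j ∉ pairedPositions (pre N x)}.Infinite := by
  refine Set.infinite_of_not_bddAbove fun ⟨t, ht⟩ => ?_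
  obtain ⟨n, hn⟩ := hx (t + 1)
  obtain ⟨q, hq, htq⟩ := exists_lt_mem_freeOnePositions hn
  have hfree := notMem_pairedPositions_pre_of_mem_freeOnePositions hq
  simp only [freeOnePositions, freePositions, Finset.mem_filter, Finset.mem_sdiff,
    Finset.mem_Icc, length_pre, List.getD_eq_getElem?_getD] at hq
  obtain ⟨⟨⟨hq1, hqn⟩, -⟩, hone⟩ := hq
  rw [getElem?_pre x (by omega)] at hone
  exact absurd (ht ⟨hq1, hone, 0, fun N _ => hfree N⟩) (not_le.2 htq)

lemma exists_mem_pairedPositions_pre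
    (hx : ∀ L : ℕ, ∃ n, (pre n x).count 2 + L ≤ (pre n x).count 1) {j : ℕ} (hj1 : 1 ≤ j)
    (hj : x (j - 1) = 2) :
    ∃ N, j ≤ N ∧ j ∈ pairedPositions (pre N x) := by
  obtain ⟨n, hn⟩ := hx (j + 1)
  have hlen := count_add_count_le_length (l := pre n x) (show 1 ≠ 2 by decide)
  rw [length_pre] at hlen
  have hjn : j ≤ n := by omega
  refine ⟨n, hjn, mem_pairedPositions_of_count_lt hj1 ?_ ?_⟩
  · rw [getElem?_pre x (by omega), hj]
  · have hprefix := count_add_count_le_length (l := pre j x) (show 1 ≠ 2 by decide)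
    rw [length_pre] at hprefix
    rw [pre_eq_pre_append_drop x hjn, List.count_append, List.count_append] at hn
    omega

end Prefixes

def letterSign (a : ℕ) : ℝ := (if a = 1 then 1 else 0) - (if a = 2 then 1 else 0)

lemma sum_letterSign_eq (x : ℕ → ℕ) (n : ℕ) :
    ∑ i ∈ Finset.range n, letterSign (x i) =
      ((pre n x).count 1 : ℝ) - (pre n x).count 2 := by
  induction n with
  | zero => simp [pre]
  | succ n ih =>
    rw [Finset.sum_range_succ, ih, pre_succ, List.count_append, List.count_append]
    simp only [List.count_singleton, beq_iff_eq, letterSign]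
    split_ifs <;> push_cast <;> ring

lemma abs_letterSign_le_one (a : ℕ) : |letterSign a| ≤ 1 := by
  unfold letterSign
  split_ifs <;> norm_num

lemma abs_letterSign {a : ℕ} (ha : a = 1 ∨ a = 2) : |letterSign a| = 1 := by
  rcases ha with rfl | rfl <;> norm_num [letterSign]

lemma measurable_letterSign : Measurable letterSign := measurable_from_top

lemma stronglyMeasurable_letterSign_apply (i : ℕ) :
    StronglyMeasurable fun x : ℕ → ℕ => letterSign (x i) :=
  (measurable_letterSign.comp (measurable_pi_apply i)).stronglyMeasurable

lemma integral_letterSign {μ : Measure (ℕ → ℕ)} [IsFiniteMeasure μ] (n : ℕ) :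
    ∫ x, letterSign (x n) ∂μ = μ.real {x | x n = 1} - μ.real {x | x n = 2} := by
  have hmeas : ∀ a : ℕ, MeasurableSet {x : ℕ → ℕ | x n = a} :=
    fun a => measurableSet_eq_fun (measurable_pi_apply n) measurable_const
  have hsplit : (fun x : ℕ → ℕ => letterSign (x n)) =
      fun x => {x | x n = 1}.indicator 1 x - {x | x n = 2}.indicator 1 x := by
    funext x
    simp [letterSign, Set.indicator_apply]
  rw [hsplit, integral_sub ((integrable_const 1).indicator (hmeas 1))
    ((integrable_const 1).indicator (hmeas 2)), integral_indicator_one (hmeas 1),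
    integral_indicator_one (hmeas 2)]

namespace IsBernoulli2

variable {μ : Measure (ℕ → ℕ)} {p₁ p₂ : ℝ}

lemma ae_eq_one_or_eq_two (hμ : IsBernoulli2 μ p₁ p₂) :
    ∀ᵐ x ∂μ, ∀ n, x n = 1 ∨ x n = 2 := by
  obtain ⟨hprob, -, h1, h2, hsum⟩ := hμ
  rw [ae_all_iff]
  intro n
  have hmeas : MeasurableSet {x : ℕ → ℕ | x n = 1 ∨ x n = 2} :=
    measurable_pi_apply n (measurableSet_singleton 1 |>.union (measurableSet_singleton 2))
  refine (prob_compl_eq_zero_iff hmeas).2 (le_antisymm prob_le_one ?_)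
  have hdisj : Disjoint {x : ℕ → ℕ | x n = 1} {x | x n = 2} :=
    Set.disjoint_left.2 fun x h1 h2 => by simp_all
  calc (1 : ENNReal) = ENNReal.ofReal (p₁ + p₂) := by rw [hsum, ENNReal.ofReal_one]
    _ ≤ ENNReal.ofReal p₁ + ENNReal.ofReal p₂ := ENNReal.ofReal_add_le
    _ = μ ({x | x n = 1} ∪ {x | x n = 2}) := by
      rw [measure_union hdisj (measurable_pi_apply n (measurableSet_singleton 2)), h1, h2]
    _ = μ {x | x n = 1 ∨ x n = 2} := rfl

lemma submartingale_sum_letterSign (hμ : IsBernoulli2 μ p₁ p₂) (h12 : p₂ ≤ p₁) :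
    Submartingale (fun n x => ∑ i ∈ Finset.range (n + 1), letterSign (x i))
      (Filtration.natural (fun i (x : ℕ → ℕ) => letterSign (x i))
        stronglyMeasurable_letterSign_apply) μ := by
  obtain ⟨hprob, hind, h1, h2, -⟩ := hμ
  have hind' : iIndepFun (fun i (x : ℕ → ℕ) => letterSign (x i)) μ :=
    hind.comp (fun _ => letterSign) fun _ => measurable_letterSign
  refine hind'.submartingale_partialSum _ (fun i => ?_) (fun i => ?_)
  · exact Integrable.of_bound (stronglyMeasurable_letterSign_apply i).aestronglyMeasurable 1
      (ae_of_all _ fun x => abs_letterSign_le_one (x i))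
  · rw [integral_letterSign, sub_nonneg, measureReal_def, measureReal_def, h1, h2]
    exact ENNReal.toReal_mono ENNReal.ofReal_ne_top (ENNReal.ofReal_le_ofReal h12)

lemma ae_forall_exists_count_two_add_le_count_one (hμ : IsBernoulli2 μ p₁ p₂)
    (h12 : p₂ ≤ p₁) : ∀ᵐ x ∂μ, ∀ L : ℕ, ∃ n, (pre n x).count 2 + L ≤ (pre n x).count 1 := by
  have : IsProbabilityMeasure μ := hμ.1
  set S : ℕ → (ℕ → ℕ) → ℝ := fun n x => ∑ i ∈ Finset.range (n + 1), letterSign (x i)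
  have hinc : ∀ᵐ x ∂μ, ∀ n, 1 ≤ |S (n + 1) x - S n x| ∧ |S (n + 1) x - S n x| ≤ (1 : NNReal) := by
    filter_upwards [hμ.ae_eq_one_or_eq_two] with x hx n
    simp only [S, Finset.sum_range_succ _ (n + 1), add_sub_cancel_left, abs_letterSign (hx _)]
    simp
  filter_upwards [(hμ.submartingale_sum_letterSign h12).ae_not_bddAbove_of_le_abs_sub
    one_pos hinc] with x hx L
  obtain ⟨_, ⟨n, rfl⟩, hn⟩ := not_bddAbove_iff.1 hx L
  have hn : (L : ℝ) < (pre (n + 1) x).count 1 - (pre (n + 1) x).count 2 := by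
    rwa [← sum_letterSign_eq]
  exact ⟨n + 1, by exact_mod_cast (by linarith : ((pre (n + 1) x).count 2 : ℝ) + L ≤
    (pre (n + 1) x).count 1)⟩

end IsBernoulli2

theorem as_prefix_majority_free_ones_and_pairing_general (μ : Measure (ℕ → ℕ))
    (p₁ p₂ : ℝ) (hμ : IsBernoulli2 μ p₁ p₂) (h12 : p₂ ≤ p₁) :
    ∀ᵐ x ∂μ,
      (∃ n, (pre n x).count 2 < (pre n x).count 1) ∧
      {j : ℕ | 1 ≤ j ∧ x (j - 1) = 1 ∧
        ∃ M, ∀ N, M ≤ N → j ∉ pairedPositions (pre N x)}.Infinite ∧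
      (∀ j, 1 ≤ j → x (j - 1) = 2 →
        ∃ N, j ≤ N ∧ j ∈ pairedPositions (pre N x)) := by
  filter_upwards [hμ.ae_forall_exists_count_two_add_le_count_one h12] with x hx
  obtain ⟨n, hn⟩ := hx 1
  exact ⟨⟨n, hn⟩, infinite_setOf_free_one hx,
    fun j hj1 hj => exists_mem_pairedPositions_pre hx hj1 hj⟩

/-- in a two-letter Bernoulli ensemble with `p₁ ≥ p₂ > 0`, almost
every sequence has an initial segment with more `1`'s than `2`'s; consequently it
contains infinitely many free `1`'s and each `2` gets paired in some
sufficiently long initial segment. -/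
theorem as_prefix_majority_free_ones_and_pairing (μ : Measure (ℕ → ℕ))
    (p₁ p₂ : ℝ) (hμ : IsBernoulli2 μ p₁ p₂) (h12 : p₂ ≤ p₁) (h2 : 0 < p₂) :
    ∀ᵐ x ∂μ,
      (∃ n, (pre n x).count 2 < (pre n x).count 1) ∧
      {j : ℕ | 1 ≤ j ∧ x (j - 1) = 1 ∧
        ∃ M, ∀ N, M ≤ N → j ∉ pairedPositions (pre N x)}.Infinite ∧
      (∀ j, 1 ≤ j → x (j - 1) = 2 →
        ∃ N, j ≤ N ∧ j ∈ pairedPositions (pre N x)) :=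
  as_prefix_majority_free_ones_and_pairing_general μ p₁ p₂ hμ h12

end RSKpaper
end
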